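/- Let x ∈ [0,1]^n be feasible for the strengthened LP of a k-column-sparse packing instance, let α > 0 with αk ≥ 2, and let S include each item i independently with probability x_i/(αk). For i ∈ [n] and j ∈ N(i), let E_{ij} be the event that Σ_{i' ∈ S : s_{i'j} ≥ s_{ij}} s_{i'j} > 1. Then for every item i and every constraint j ∈ N(i): Pr[E_{ij} | i ∈ S] ≤ (1/(αk)) · (1 + (2/(αk))^{1/3}). -/
import Mathlib

open Finset
open scoped Classical BigOperators

noncomputable def prodP {n : ℕ} (q : Fin n → ℝ) (T : Finset (Fin n)) : ℝ :=
  (∏ i ∈ T, q i) * ∏ i ∈ Tᶜ, (1 - q i)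

noncomputable def prE {n : ℕ} (q : Fin n → ℝ) (E : Finset (Fin n) → Prop) : ℝ :=
  ∑ T : Finset (Fin n), if E T then prodP q T else 0

variable {n : ℕ} {q : Fin n → ℝ}

lemma prodP_nonneg (h0 : ∀ i, 0 ≤ q i) (h1 : ∀ i, q i ≤ 1) (T : Finset (Fin n)) :
    0 ≤ prodP q T :=
  mul_nonneg (prod_nonneg fun i _ => h0 i) (prod_nonneg fun i _ => by linarith [h1 i])

lemma prE_congr {E F : Finset (Fin n) → Prop} (h : ∀ T, E T ↔ F T) : prE q E = prE q F := by
  unfold prE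
  exact Finset.sum_congr rfl fun T _ => if_congr (h T) rfl rfl

lemma prE_mono (h0 : ∀ i, 0 ≤ q i) (h1 : ∀ i, q i ≤ 1) {E F : Finset (Fin n) → Prop}
    (h : ∀ T, E T → F T) : prE q E ≤ prE q F := by
  refine Finset.sum_le_sum fun T _ => ?_
  by_cases hE : E T
  · rw [if_pos hE, if_pos (h T hE)]
  · rw [if_neg hE]
    split
    · exact prodP_nonneg h0 h1 T
    · exact le_refl 0

lemma prE_exists_le (h0 : ∀ i, 0 ≤ q i) (h1 : ∀ i, q i ≤ 1) {ι : Type*} (D : Finset ι)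
    (F : ι → Finset (Fin n) → Prop) :
    prE q (fun T => ∃ a ∈ D, F a T) ≤ ∑ a ∈ D, prE q (F a) := by
  unfold prE
  rw [Finset.sum_comm]
  refine Finset.sum_le_sum fun T _ => ?_
  by_cases hE : ∃ a ∈ D, F a T
  · rw [if_pos hE]
    obtain ⟨a, haD, haF⟩ := hE
    have : (if F a T then prodP q T else 0) = prodP q T := if_pos haF
    calc prodP q T = (if F a T then prodP q T else 0) := this.symm
      _ ≤ ∑ a ∈ D, if F a T then prodP q T else 0 :=
        Finset.single_le_sum (f := fun b => if F b T then prodP q T else 0) (fun b _ => by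
          split
          · exact prodP_nonneg h0 h1 T
          · exact le_refl 0) haD
  · rw [if_neg hE]
    exact Finset.sum_nonneg fun b _ => by
      split
      · exact prodP_nonneg h0 h1 T
      · exact le_refl 0

lemma prE_or_le (h0 : ∀ i, 0 ≤ q i) (h1 : ∀ i, q i ≤ 1) {E F : Finset (Fin n) → Prop} :
    prE q (fun T => E T ∨ F T) ≤ prE q E + prE q F := by
  unfold prE
  rw [← Finset.sum_add_distrib]
  refine Finset.sum_le_sum fun T _ => ?_
  have hP := prodP_nonneg h0 h1 T
  by_cases hE : E T
  · rw [if_pos (Or.inl hE), if_pos hE]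
    have : (0:ℝ) ≤ if F T then prodP q T else 0 := by split; exact hP; exact le_refl 0
    linarith
  · by_cases hF : F T
    · rw [if_pos (Or.inr hF), if_neg hE, if_pos hF]
      linarith
    · rw [if_neg (by tauto), if_neg hE, if_neg hF]
      norm_num

lemma prE_eq_sum_filter (E : Finset (Fin n) → Prop) :
    prE q E = ∑ T ∈ univ.filter E, prodP q T :=
  (Finset.sum_filter E (prodP q)).symm

lemma prE_superset (h0 : ∀ i, 0 ≤ q i) (h1 : ∀ i, q i ≤ 1) (A : Finset (Fin n)) :
    prE q (fun T => A ⊆ T) = ∏ a ∈ A, q a := by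
  rw [prE_eq_sum_filter]
  refine Eq.trans (b := ∑ U ∈ Aᶜ.powerset, prodP q (A ∪ U)) ?_ ?_
  · refine Finset.sum_nbij' (fun T => T \ A) (fun U => A ∪ U) ?_ ?_ ?_ ?_ ?_
    · intro T hT
      simp only [Finset.mem_filter, Finset.mem_univ, true_and] at hT
      rw [Finset.mem_powerset]
      intro a ha
      rw [Finset.mem_sdiff] at ha
      rw [Finset.mem_compl]
      exact ha.2
    · intro U hU
      simp only [Finset.mem_filter, Finset.mem_univ, true_and]
      exact Finset.subset_union_left
    · intro T hT
      simp only [Finset.mem_filter, Finset.mem_univ, true_and] at hT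
      exact Finset.union_sdiff_of_subset hT
    · intro U hU
      rw [Finset.mem_powerset] at hU
      show (A ∪ U) \ A = U
      have hdj : Disjoint A U := by
        rw [Finset.disjoint_left]
        intro a haA haU
        have := hU haU
        rw [Finset.mem_compl] at this
        exact this haA
      rw [Finset.union_sdiff_cancel_left hdj]
    · intro T hT
      simp only [Finset.mem_filter, Finset.mem_univ, true_and] at hT
      rw [Finset.union_sdiff_of_subset hT]
  · have heq : ∀ U ∈ Aᶜ.powerset, prodP q (A ∪ U)
        = (∏ a ∈ A, q a) * ((∏ a ∈ U, q a) * ∏ a ∈ Aᶜ \ U, (1 - q a)) := by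
      intro U hU
      rw [Finset.mem_powerset] at hU
      have hdisj : Disjoint A U := by
        rw [Finset.disjoint_left]
        intro a haA haU
        have := hU haU
        rw [Finset.mem_compl] at this
        exact this haA
      unfold prodP
      rw [Finset.prod_union hdisj]
      have hc : (A ∪ U)ᶜ = Aᶜ \ U := by
        ext a
        simp only [Finset.mem_compl, Finset.mem_union, Finset.mem_sdiff]
        tauto
      rw [hc]
      ring
    rw [Finset.sum_congr rfl heq, ← Finset.mul_sum]
    have h2 : ∑ U ∈ Aᶜ.powerset, (∏ a ∈ U, q a) * ∏ a ∈ Aᶜ \ U, (1 - q a)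
        = ∏ a ∈ Aᶜ, (q a + (1 - q a)) := (Finset.prod_add _ _ _).symm
    rw [h2]
    have h3 : ∏ a ∈ Aᶜ, (q a + (1 - q a)) = 1 :=
      Finset.prod_eq_one fun a _ => by ring
    rw [h3, mul_one]

lemma prE_mem (h0 : ∀ i, 0 ≤ q i) (h1 : ∀ i, q i ≤ 1) (i : Fin n) :
    prE q (fun T => i ∈ T) = q i := by
  have := prE_superset h0 h1 {i}
  rw [prE_congr (F := fun T => ({i} : Finset (Fin n)) ⊆ T)
    (fun T => by simp [Finset.singleton_subset_iff])]
  rw [this, Finset.prod_singleton]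

lemma prE_pair (h0 : ∀ i, 0 ≤ q i) (h1 : ∀ i, q i ≤ 1) {a i : Fin n} (hai : a ≠ i) :
    prE q (fun T => a ∈ T ∧ i ∈ T) = q a * q i := by
  rw [prE_congr (F := fun T => ({a, i} : Finset (Fin n)) ⊆ T)
    (fun T => by simp [Finset.insert_subset_iff])]
  rw [prE_superset h0 h1, Finset.prod_pair hai]

lemma prE_triple (h0 : ∀ i, 0 ≤ q i) (h1 : ∀ i, q i ≤ 1) {a b i : Fin n}
    (hab : a ≠ b) (hai : a ≠ i) (hbi : b ≠ i) :
    prE q (fun T => a ∈ T ∧ b ∈ T ∧ i ∈ T) = q a * q b * q i := by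
  rw [prE_congr (F := fun T => ({a, b, i} : Finset (Fin n)) ⊆ T)
    (fun T => by simp [Finset.insert_subset_iff])]
  rw [prE_superset h0 h1]
  rw [Finset.prod_insert (by simp [hab, hai]), Finset.prod_insert (by simp [hbi]),
    Finset.prod_singleton, mul_assoc]

section mainproof
variable {n : ℕ} {q : Fin n → ℝ}

lemma expectation_aux (i : Fin n) (p : Fin n → Prop) [DecidablePred p] (w : Fin n → ℝ) :
    ∑ T : Finset (Fin n), (if i ∈ T then prodP q T * ∑ a ∈ T.filter p, w a else 0)
    = ∑ a ∈ univ.filter p, w a * prE q (fun T => a ∈ T ∧ i ∈ T) := by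
  have hpt : ∀ T : Finset (Fin n), (if i ∈ T then prodP q T * ∑ a ∈ T.filter p, w a else 0)
      = ∑ a ∈ univ.filter p, w a * (if a ∈ T ∧ i ∈ T then prodP q T else 0) := by
    intro T
    by_cases hiT : i ∈ T
    · rw [if_pos hiT]
      have hTf : T.filter p = (univ.filter p).filter (fun a => a ∈ T) := by
        ext a
        simp only [Finset.mem_filter, Finset.mem_univ, true_and]
        tauto
      rw [hTf, Finset.sum_filter, Finset.mul_sum]
      refine Finset.sum_congr rfl fun a ha => ?_
      by_cases haT : a ∈ T
      · rw [if_pos haT, if_pos ⟨haT, hiT⟩]; ring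
      · rw [if_neg haT, if_neg (by tauto)]; ring
    · rw [if_neg hiT]
      symm
      refine Finset.sum_eq_zero fun a ha => ?_
      rw [if_neg (by tauto)]; ring
  rw [Finset.sum_congr rfl fun T _ => hpt T, Finset.sum_comm]
  refine Finset.sum_congr rfl fun a ha => ?_
  unfold prE
  rw [Finset.mul_sum]
  exact Finset.sum_congr rfl fun T _ => by
    by_cases h : a ∈ T ∧ i ∈ T
    · rw [if_pos h, if_pos h]; try ring
    · rw [if_neg h, if_neg h]; try ring

lemma pair_sum_le (h0 : ∀ a, 0 ≤ q a) (C : Finset (Fin n)) :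
    ∑ p ∈ (C ×ˢ C).filter (fun p => p.1 < p.2), q p.1 * q p.2
      ≤ (∑ a ∈ C, q a) ^ 2 / 2 := by
  have hswap : ∑ p ∈ (C ×ˢ C).filter (fun p => p.2 < p.1), q p.1 * q p.2
      = ∑ p ∈ (C ×ˢ C).filter (fun p => p.1 < p.2), q p.1 * q p.2 := by
    refine Finset.sum_nbij' (fun p => Prod.swap p) (fun p => Prod.swap p) ?_ ?_ ?_ ?_ ?_
    · intro p hp
      simp only [Finset.mem_filter, Finset.mem_product] at hp ⊢
      exact ⟨⟨hp.1.2, hp.1.1⟩, hp.2⟩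
    · intro p hp
      simp only [Finset.mem_filter, Finset.mem_product] at hp ⊢
      exact ⟨⟨hp.1.2, hp.1.1⟩, hp.2⟩
    · intro p _; exact Prod.swap_swap p
    · intro p _; exact Prod.swap_swap p
    · intro p _; exact mul_comm _ _
  have hdisj : Disjoint ((C ×ˢ C).filter (fun p => p.1 < p.2))
      ((C ×ˢ C).filter (fun p => p.2 < p.1)) := by
    rw [Finset.disjoint_left]
    intro p hp1 hp2
    simp only [Finset.mem_filter] at hp1 hp2
    exact absurd hp2.2 (not_lt.mpr (le_of_lt hp1.2))
  have hsub : (C ×ˢ C).filter (fun p => p.1 < p.2) ∪ (C ×ˢ C).filter (fun p => p.2 < p.1)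
      ⊆ C ×ˢ C := by
    intro p hp
    rcases Finset.mem_union.mp hp with h | h
    · exact Finset.filter_subset _ _ h
    · exact Finset.filter_subset _ _ h
  have hle : ∑ p ∈ (C ×ˢ C).filter (fun p => p.1 < p.2), q p.1 * q p.2
      + ∑ p ∈ (C ×ˢ C).filter (fun p => p.2 < p.1), q p.1 * q p.2
      ≤ ∑ p ∈ C ×ˢ C, q p.1 * q p.2 := by
    rw [← Finset.sum_union hdisj]
    exact Finset.sum_le_sum_of_subset_of_nonneg hsub
      (fun p _ _ => mul_nonneg (h0 p.1) (h0 p.2))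
  have hsq : ∑ p ∈ C ×ˢ C, q p.1 * q p.2 = (∑ a ∈ C, q a) ^ 2 := by
    rw [Finset.sum_product, sq, Finset.sum_mul_sum]
  rw [hsq, hswap] at hle
  linarith

end mainproof

set_option maxHeartbeats 1600000 in
/-- for `x` feasible for the strengthened LP and any item `i` and
constraint `j ∈ N(i)`, `Pr[E_ij | i ∈ S] ≤ (1/(αk))(1 + (2/(αk))^{1/3})`
(stated in multiplied-out form, i.e. multiplied through by `Pr[i ∈ S]`). -/
theorem deletion_event_bound (n m k : ℕ) (s : Fin n → Fin m → ℝ)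
    (hs : ∀ i j, s i j ∈ Set.Icc (0:ℝ) 1)
    (hsparse : ∀ i, ((univ : Finset (Fin m)).filter (fun j => 0 < s i j)).card ≤ k)
    (x : Fin n → ℝ) (hx : ∀ i, x i ∈ Set.Icc (0:ℝ) 1)
    (hLP : ∀ j, ∑ i, s i j * x i ≤ 1)
    (hLPbig : ∀ j, ∑ i ∈ univ.filter (fun i => 1/2 < s i j), x i ≤ 1)
    (α : ℝ) (hα : 0 < α) (hαk : 2 ≤ α * k)
    (q : Fin n → ℝ) (hq : ∀ i, q i = x i / (α * k))
    (i : Fin n) (j : Fin m) (hij : 0 < s i j) :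
    prE q (fun T =>
        (1 < ∑ i' ∈ T.filter (fun i'' => s i j ≤ s i'' j), s i' j) ∧ i ∈ T)
      ≤ (1 / (α * k)) * (1 + (2 / (α * k)) ^ ((1:ℝ)/3)) * prE q (fun T => i ∈ T) := by
  set β := α * (k:ℝ) with hβdef
  have hβ2 : (2:ℝ) ≤ β := hαk
  have hβpos : (0:ℝ) < β := lt_of_lt_of_le (by norm_num) hβ2
  have hq0 : ∀ a, 0 ≤ q a := fun a => by
    rw [hq]; exact div_nonneg (hx a).1 (le_of_lt hβpos)
  have hq1 : ∀ a, q a ≤ 1 := fun a => by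
    rw [hq, div_le_one hβpos]; linarith [(hx a).2]
  set ε := (2 / β) ^ ((1:ℝ)/3) with hεdef
  have h2β0 : (0:ℝ) < 2/β := by positivity
  have h2β1 : 2/β ≤ 1 := by rw [div_le_one hβpos]; exact hβ2
  have hε0 : 0 < ε := Real.rpow_pos_of_pos h2β0 _
  have hε1 : ε ≤ 1 := Real.rpow_le_one (le_of_lt h2β0) h2β1 (by norm_num)
  have hε3 : ε ^ 3 * β = 2 := by
    have h2 : ε ^ (3:ℕ) = (2/β) ^ (((1:ℝ)/3) * 3) := by
      rw [hεdef, ← Real.rpow_natCast ((2/β) ^ ((1:ℝ)/3)) 3, ← Real.rpow_mul (le_of_lt h2β0)]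
      norm_num
    have h3 : ((1:ℝ)/3) * 3 = 1 := by norm_num
    rw [h2, h3, Real.rpow_one] at *
    field_simp
  rw [prE_mem hq0 hq1 i]
  set t := s i j with htdef
  have ht0 : 0 < t := hij
  have ht1 : t ≤ 1 := (hs i j).2
  have hiF : i ∈ univ.filter (fun a => t ≤ s a j) := by
    rw [Finset.mem_filter]; exact ⟨Finset.mem_univ i, le_refl t⟩
  have hsub_q : ∀ D : Finset (Fin n), D ⊆ univ.filter (fun a => 1/2 < s a j) →
      ∑ a ∈ D, q a ≤ 1/β := by
    intro D hD
    have h1 : ∑ a ∈ D, q a = (∑ a ∈ D, x a)/β := by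
      rw [Finset.sum_div]
      exact Finset.sum_congr rfl fun a _ => hq a
    rw [h1]
    gcongr
    exact le_trans (Finset.sum_le_sum_of_subset_of_nonneg hD (fun a _ _ => (hx a).1)) (hLPbig j)
  rcases lt_or_ge (1/2 : ℝ) t with hbig | hsmall
  · -- CASE A : t > 1/2
    have himp : ∀ T : Finset (Fin n),
        ((1 < ∑ i' ∈ T.filter (fun i'' => t ≤ s i'' j), s i' j) ∧ i ∈ T) →
        ∃ a ∈ (univ.filter (fun a => 1/2 < s a j)).erase i, a ∈ T ∧ i ∈ T := by
      intro T hT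
      obtain ⟨hZ, hiT⟩ := hT
      by_contra hcon
      push_neg at hcon
      have hsubs : T.filter (fun i'' => t ≤ s i'' j) ⊆ {i} := by
        intro a ha
        simp only [Finset.mem_filter] at ha
        rw [Finset.mem_singleton]
        by_contra hne
        have haB : a ∈ (univ.filter (fun a => 1/2 < s a j)).erase i := by
          rw [Finset.mem_erase, Finset.mem_filter]
          exact ⟨hne, Finset.mem_univ a, lt_of_lt_of_le hbig ha.2⟩
        exact (hcon a haB ha.1) hiT
      have hle1 : ∑ i' ∈ T.filter (fun i'' => t ≤ s i'' j), s i' j ≤ ∑ i' ∈ ({i} : Finset (Fin n)), s i' j :=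
        Finset.sum_le_sum_of_subset_of_nonneg hsubs (fun a _ _ => (hs a j).1)
      rw [Finset.sum_singleton] at hle1
      linarith
    calc prE q (fun T => (1 < ∑ i' ∈ T.filter (fun i'' => t ≤ s i'' j), s i' j) ∧ i ∈ T)
        ≤ prE q (fun T => ∃ a ∈ (univ.filter (fun a => 1/2 < s a j)).erase i, a ∈ T ∧ i ∈ T) :=
          prE_mono hq0 hq1 himp
      _ ≤ ∑ a ∈ (univ.filter (fun a => 1/2 < s a j)).erase i, prE q (fun T => a ∈ T ∧ i ∈ T) :=
          prE_exists_le hq0 hq1 _ _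
      _ = ∑ a ∈ (univ.filter (fun a => 1/2 < s a j)).erase i, q a * q i :=
          Finset.sum_congr rfl fun a ha => prE_pair hq0 hq1 (Finset.mem_erase.mp ha).1
      _ = (∑ a ∈ (univ.filter (fun a => 1/2 < s a j)).erase i, q a) * q i :=
          (Finset.sum_mul _ _ _).symm
      _ ≤ (1/β) * q i := mul_le_mul_of_nonneg_right
          (hsub_q _ (Finset.erase_subset i _)) (hq0 i)
      _ ≤ (1/β) * (1 + ε) * q i := by
          have h := hq0 i
          have hb : (0:ℝ) < 1/β := by positivity
          nlinarith [mul_nonneg (mul_nonneg (le_of_lt hb) (le_of_lt hε0)) h]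
  rcases le_or_gt (ε/(1+ε)) t with hmid | hlow
  · -- CASE B : ε/(1+ε) ≤ t ≤ 1/2
    have h1ε : (0:ℝ) < 1 + ε := by linarith
    have himp : ∀ T : Finset (Fin n),
        ((1 < ∑ i' ∈ T.filter (fun i'' => t ≤ s i'' j), s i' j) ∧ i ∈ T) →
        ((∃ a ∈ univ.filter (fun a => 1/2 < s a j), a ∈ T ∧ i ∈ T) ∨
          (∃ p ∈ (((univ.filter (fun a => t ≤ s a j)).erase i) ×ˢ
              ((univ.filter (fun a => t ≤ s a j)).erase i)).filter (fun p => p.1 < p.2),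
            p.1 ∈ T ∧ p.2 ∈ T ∧ i ∈ T)) := by
      intro T hT
      obtain ⟨hZ, hiT⟩ := hT
      by_cases hbigcase : ∃ a ∈ univ.filter (fun a => 1/2 < s a j), a ∈ T
      · obtain ⟨a, haB, haT⟩ := hbigcase
        exact Or.inl ⟨a, haB, haT, hiT⟩
      · push_neg at hbigcase
        right
        have hWsmall : ∀ a ∈ T.filter (fun i'' => t ≤ s i'' j), s a j ≤ 1/2 := by
          intro a ha
          simp only [Finset.mem_filter] at ha
          by_contra hgt
          exact (hbigcase a (by simp only [Finset.mem_filter]; exact ⟨Finset.mem_univ a, lt_of_not_ge hgt⟩)) ha.1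
        have hsum2 : ∑ a ∈ T.filter (fun i'' => t ≤ s i'' j), s a j
            ≤ ((T.filter (fun i'' => t ≤ s i'' j)).card : ℝ) * (1/2) := by
          calc ∑ a ∈ T.filter (fun i'' => t ≤ s i'' j), s a j
              ≤ ∑ _a ∈ T.filter (fun i'' => t ≤ s i'' j), (1/2 : ℝ) :=
                Finset.sum_le_sum hWsmall
            _ = ((T.filter (fun i'' => t ≤ s i'' j)).card : ℝ) * (1/2) := by
                rw [Finset.sum_const, nsmul_eq_mul]
        have hWcardR : (2:ℝ) < ((T.filter (fun i'' => t ≤ s i'' j)).card : ℝ) := by linarith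
        have hWcard3 : 3 ≤ (T.filter (fun i'' => t ≤ s i'' j)).card := by
          have : 2 < (T.filter (fun i'' => t ≤ s i'' j)).card := by exact_mod_cast hWcardR
          omega
        have hiW : i ∈ T.filter (fun i'' => t ≤ s i'' j) := by
          rw [Finset.mem_filter]; exact ⟨hiT, le_refl t⟩
        have hcard2 : 1 < ((T.filter (fun i'' => t ≤ s i'' j)).erase i).card := by
          rw [Finset.card_erase_of_mem hiW]; omega
        obtain ⟨a, haW, b, hbW, hab⟩ := Finset.one_lt_card.mp hcard2
        have haC : a ∈ (univ.filter (fun a => t ≤ s a j)).erase i ∧ a ∈ T := by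
          rw [Finset.mem_erase, Finset.mem_filter] at haW ⊢
          exact ⟨⟨haW.1, Finset.mem_univ a, haW.2.2⟩, haW.2.1⟩
        have hbC : b ∈ (univ.filter (fun a => t ≤ s a j)).erase i ∧ b ∈ T := by
          rw [Finset.mem_erase, Finset.mem_filter] at hbW ⊢
          exact ⟨⟨hbW.1, Finset.mem_univ b, hbW.2.2⟩, hbW.2.1⟩
        rcases lt_or_gt_of_ne hab with hlt | hgt
        · refine ⟨(a, b), ?_, haC.2, hbC.2, hiT⟩
          rw [Finset.mem_filter, Finset.mem_product]
          exact ⟨⟨haC.1, hbC.1⟩, hlt⟩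
        · refine ⟨(b, a), ?_, hbC.2, haC.2, hiT⟩
          rw [Finset.mem_filter, Finset.mem_product]
          exact ⟨⟨hbC.1, haC.1⟩, hgt⟩
    have hCq : t * (∑ a ∈ (univ.filter (fun a => t ≤ s a j)).erase i, q a) ≤ 1/β := by
      rw [Finset.mul_sum]
      calc ∑ a ∈ (univ.filter (fun a => t ≤ s a j)).erase i, t * q a
          ≤ ∑ a ∈ (univ.filter (fun a => t ≤ s a j)).erase i, s a j * q a := by
            refine Finset.sum_le_sum fun a ha => ?_
            have ht' : t ≤ s a j := by
              rw [Finset.mem_erase, Finset.mem_filter] at ha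
              exact ha.2.2
            exact mul_le_mul_of_nonneg_right ht' (hq0 a)
        _ = (∑ a ∈ (univ.filter (fun a => t ≤ s a j)).erase i, s a j * x a)/β := by
            rw [Finset.sum_div]
            refine Finset.sum_congr rfl fun a _ => by rw [hq a]; ring
        _ ≤ 1/β := by
            gcongr
            refine le_trans (Finset.sum_le_sum_of_subset_of_nonneg (Finset.subset_univ _)
              (fun a _ _ => mul_nonneg (hs a j).1 (hx a).1)) (hLP j)
    have hsig0 : 0 ≤ ∑ a ∈ (univ.filter (fun a => t ≤ s a j)).erase i, q a :=
      Finset.sum_nonneg fun a _ => hq0 a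
    have hεt : ε ≤ t * (1+ε) := by
      rw [div_le_iff₀ h1ε] at hmid
      exact hmid
    have hkey : (∑ a ∈ (univ.filter (fun a => t ≤ s a j)).erase i, q a)^2 / 2 ≤ ε/β := by
      set σ := ∑ a ∈ (univ.filter (fun a => t ≤ s a j)).erase i, q a with hσdef
      have hσε : ε * σ ≤ (1+ε)/β := by
        have h2 : ε * σ ≤ (t * (1+ε)) * σ := mul_le_mul_of_nonneg_right hεt hsig0
        have h3 : (t * (1+ε)) * σ = (1+ε) * (t * σ) := by ring
        have h4 : (1+ε) * (t * σ) ≤ (1+ε) * (1/β) := mul_le_mul_of_nonneg_left hCq (le_of_lt h1ε)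
        calc ε * σ ≤ (t * (1+ε)) * σ := h2
          _ = (1+ε) * (t * σ) := h3
          _ ≤ (1+ε) * (1/β) := h4
          _ = (1+ε)/β := by ring
      have hsq : (ε*σ*β)^2 ≤ (1+ε)^2 := by
        have h5 : ε*σ*β ≤ 1+ε := by
          have := mul_le_mul_of_nonneg_right hσε (le_of_lt hβpos)
          calc ε*σ*β = (ε*σ)*β := by ring
            _ ≤ ((1+ε)/β)*β := this
            _ = 1+ε := by field_simp
        have h6 : 0 ≤ ε*σ*β := by positivity
        nlinarith
      rw [div_le_div_iff₀ (by norm_num) hβpos]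
      -- goal : σ^2 * β ≤ ε * 2
      nlinarith [hsq, hε3, hε0, hε1, hβpos, hsig0, mul_pos (mul_pos hε0 hε0) hβpos]
    calc prE q (fun T => (1 < ∑ i' ∈ T.filter (fun i'' => t ≤ s i'' j), s i' j) ∧ i ∈ T)
        ≤ prE q (fun T => (∃ a ∈ univ.filter (fun a => 1/2 < s a j), a ∈ T ∧ i ∈ T) ∨
            (∃ p ∈ (((univ.filter (fun a => t ≤ s a j)).erase i) ×ˢ
                ((univ.filter (fun a => t ≤ s a j)).erase i)).filter (fun p => p.1 < p.2),
              p.1 ∈ T ∧ p.2 ∈ T ∧ i ∈ T)) := prE_mono hq0 hq1 himp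
      _ ≤ prE q (fun T => ∃ a ∈ univ.filter (fun a => 1/2 < s a j), a ∈ T ∧ i ∈ T)
          + prE q (fun T => ∃ p ∈ (((univ.filter (fun a => t ≤ s a j)).erase i) ×ˢ
                ((univ.filter (fun a => t ≤ s a j)).erase i)).filter (fun p => p.1 < p.2),
              p.1 ∈ T ∧ p.2 ∈ T ∧ i ∈ T) := prE_or_le hq0 hq1
      _ ≤ (∑ a ∈ univ.filter (fun a => 1/2 < s a j), prE q (fun T => a ∈ T ∧ i ∈ T))
          + ∑ p ∈ (((univ.filter (fun a => t ≤ s a j)).erase i) ×ˢ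
                ((univ.filter (fun a => t ≤ s a j)).erase i)).filter (fun p => p.1 < p.2),
              prE q (fun T => p.1 ∈ T ∧ p.2 ∈ T ∧ i ∈ T) :=
          add_le_add (prE_exists_le hq0 hq1 _ _) (prE_exists_le hq0 hq1 _ _)
      _ ≤ (1/β) * q i + ((∑ a ∈ (univ.filter (fun a => t ≤ s a j)).erase i, q a)^2/2) * q i := by
          refine add_le_add ?_ ?_
          · have e1 : ∀ a ∈ univ.filter (fun a => 1/2 < s a j),
                prE q (fun T => a ∈ T ∧ i ∈ T) = q a * q i := by
              intro a ha
              refine prE_pair hq0 hq1 ?_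
              intro hai
              rw [Finset.mem_filter] at ha
              rw [hai] at ha
              linarith [ha.2]
            rw [Finset.sum_congr rfl e1, ← Finset.sum_mul]
            exact mul_le_mul_of_nonneg_right (hsub_q _ (Finset.Subset.refl _)) (hq0 i)
          · have e2 : ∀ p ∈ (((univ.filter (fun a => t ≤ s a j)).erase i) ×ˢ
                ((univ.filter (fun a => t ≤ s a j)).erase i)).filter (fun p => p.1 < p.2),
                prE q (fun T => p.1 ∈ T ∧ p.2 ∈ T ∧ i ∈ T) = q p.1 * q p.2 * q i := by
              intro p hp
              rw [Finset.mem_filter, Finset.mem_product] at hp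
              have h1 : p.1 ≠ i := (Finset.mem_erase.mp hp.1.1).1
              have h2 : p.2 ≠ i := (Finset.mem_erase.mp hp.1.2).1
              have h12 : p.1 ≠ p.2 := ne_of_lt hp.2
              rw [prE_congr (F := fun T => p.1 ∈ T ∧ p.2 ∈ T ∧ i ∈ T) (fun T => Iff.rfl)]
              exact prE_triple hq0 hq1 h12 h1 h2
            rw [Finset.sum_congr rfl e2, ← Finset.sum_mul]
            exact mul_le_mul_of_nonneg_right
              (pair_sum_le hq0 ((univ.filter (fun a => t ≤ s a j)).erase i)) (hq0 i)
      _ ≤ (1/β) * q i + (ε/β) * q i := by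
          refine add_le_add (le_refl _) (mul_le_mul_of_nonneg_right hkey (hq0 i))
      _ = (1/β) * (1 + ε) * q i := by ring
  · -- CASE C : t < ε/(1+ε)
    have h1ε : (0:ℝ) < 1 + ε := by linarith
    have htup : t < 1/2 := by
      have : ε/(1+ε) ≤ 1/2 := by
        rw [div_le_iff₀ h1ε]; linarith
      linarith
    have h1t : (0:ℝ) < 1 - t := by linarith
    have hinv : 1/(1-t) ≤ 1 + ε := by
      rw [div_le_iff₀ h1t]
      have ht2 : t * (1+ε) < ε := (lt_div_iff₀ h1ε).mp hlow
      nlinarith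
    have hpt : ∀ T : Finset (Fin n),
        ∀ hd : Decidable ((1 < ∑ i' ∈ T.filter (fun i'' => t ≤ s i'' j), s i' j) ∧ i ∈ T),
        @ite ℝ ((1 < ∑ i' ∈ T.filter (fun i'' => t ≤ s i'' j), s i' j) ∧ i ∈ T) hd (prodP q T) 0
        ≤ (if i ∈ T then prodP q T *
            (((∑ i' ∈ T.filter (fun i'' => t ≤ s i'' j), s i' j) - t)/(1-t)) else 0) := by
      intro T hd
      have hP := prodP_nonneg hq0 hq1 T
      by_cases hiT : i ∈ T
      · have hZt : t ≤ ∑ i' ∈ T.filter (fun i'' => t ≤ s i'' j), s i' j := by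
          refine Finset.single_le_sum (f := fun i' => s i' j) ?_ ?_
          · intro a _; exact (hs a j).1
          · rw [Finset.mem_filter]; exact ⟨hiT, le_refl t⟩
        rw [if_pos hiT]
        by_cases hE : (1 < ∑ i' ∈ T.filter (fun i'' => t ≤ s i'' j), s i' j) ∧ i ∈ T
        · rw [if_pos hE]
          have hdiv : 1 ≤ ((∑ i' ∈ T.filter (fun i'' => t ≤ s i'' j), s i' j) - t)/(1-t) := by
            rw [le_div_iff₀ h1t]; linarith [hE.1]
          nlinarith
        · rw [if_neg hE]
          have hdd : 0 ≤ ((∑ i' ∈ T.filter (fun i'' => t ≤ s i'' j), s i' j) - t)/(1-t) :=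
            div_nonneg (by linarith) (le_of_lt h1t)
          exact mul_nonneg hP hdd
      · rw [if_neg hiT, if_neg (fun hE => hiT hE.2)]
    have hfac : ∑ T : Finset (Fin n), (if i ∈ T then prodP q T *
            (((∑ i' ∈ T.filter (fun i'' => t ≤ s i'' j), s i' j) - t)/(1-t)) else 0)
        = (1/(1-t)) * ∑ T : Finset (Fin n), (if i ∈ T then prodP q T *
            ((∑ i' ∈ T.filter (fun i'' => t ≤ s i'' j), s i' j) - t) else 0) := by
      rw [Finset.mul_sum]
      refine Finset.sum_congr rfl fun T _ => ?_
      by_cases hiT : i ∈ T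
      · rw [if_pos hiT, if_pos hiT]; ring
      · rw [if_neg hiT, if_neg hiT]; ring
    have hkey : ∑ T : Finset (Fin n), (if i ∈ T then prodP q T *
            ((∑ i' ∈ T.filter (fun i'' => t ≤ s i'' j), s i' j) - t) else 0)
        = (∑ a ∈ (univ.filter (fun a => t ≤ s a j)).erase i, s a j * q a) * q i := by
      have e1 : ∀ T : Finset (Fin n), (if i ∈ T then prodP q T *
            ((∑ i' ∈ T.filter (fun i'' => t ≤ s i'' j), s i' j) - t) else 0)
          = (if i ∈ T then prodP q T * (∑ i' ∈ T.filter (fun i'' => t ≤ s i'' j), s i' j) else 0)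
            - t * (if i ∈ T then prodP q T else 0) := by
        intro T
        by_cases hiT : i ∈ T
        · rw [if_pos hiT, if_pos hiT, if_pos hiT]; ring
        · rw [if_neg hiT, if_neg hiT, if_neg hiT]; ring
      rw [Finset.sum_congr rfl fun T _ => e1 T, Finset.sum_sub_distrib, ← Finset.mul_sum]
      rw [expectation_aux i (fun a => t ≤ s a j) (fun a => s a j)]
      have e3 : (∑ T : Finset (Fin n), if i ∈ T then prodP q T else 0) = q i := by
        rw [← prE_mem hq0 hq1 i]
        unfold prE
        exact Finset.sum_congr rfl fun T _ => by congr
      rw [e3]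
      rw [← Finset.sum_erase_add (univ.filter (fun a => t ≤ s a j))
        (fun a => s a j * prE q (fun T => a ∈ T ∧ i ∈ T)) hiF]
      have e4 : prE q (fun T => i ∈ T ∧ i ∈ T) = q i := by
        rw [prE_congr (F := fun T => i ∈ T) (fun T => ⟨And.left, fun h => ⟨h, h⟩⟩)]
        exact prE_mem hq0 hq1 i
      have e5 : ∀ a ∈ (univ.filter (fun a => t ≤ s a j)).erase i,
          s a j * prE q (fun T => a ∈ T ∧ i ∈ T) = s a j * (q a * q i) := by
        intro a ha
        rw [prE_pair hq0 hq1 (Finset.mem_erase.mp ha).1]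
      rw [Finset.sum_congr rfl e5, e4]
      rw [Finset.sum_mul, ← htdef]
      have e6 : ∀ a ∈ (univ.filter (fun a => t ≤ s a j)).erase i,
          s a j * (q a * q i) = s a j * q a * q i := fun a _ => by ring
      rw [Finset.sum_congr rfl e6]
      ring
    have hFq : ∑ a ∈ (univ.filter (fun a => t ≤ s a j)).erase i, s a j * q a ≤ 1/β := by
      have e : ∑ a ∈ (univ.filter (fun a => t ≤ s a j)).erase i, s a j * q a
          = (∑ a ∈ (univ.filter (fun a => t ≤ s a j)).erase i, s a j * x a)/β := by
        rw [Finset.sum_div]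
        exact Finset.sum_congr rfl fun a _ => by rw [hq a]; ring
      rw [e]
      gcongr
      exact le_trans (Finset.sum_le_sum_of_subset_of_nonneg (Finset.subset_univ _)
        (fun a _ _ => mul_nonneg (hs a j).1 (hx a).1)) (hLP j)
    have hmain : prE q (fun T => (1 < ∑ i' ∈ T.filter (fun i'' => t ≤ s i'' j), s i' j) ∧ i ∈ T)
        ≤ (1/(1-t)) * ((∑ a ∈ (univ.filter (fun a => t ≤ s a j)).erase i, s a j * q a) * q i) := by
      rw [← hkey, ← hfac]
      exact Finset.sum_le_sum fun T _ => hpt T _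
    refine le_trans hmain ?_
    have hstep1 : (1/(1-t)) * ((∑ a ∈ (univ.filter (fun a => t ≤ s a j)).erase i, s a j * q a) * q i)
        ≤ (1/(1-t)) * ((1/β) * q i) := by
      have h7 : (0:ℝ) ≤ 1/(1-t) := le_of_lt (div_pos one_pos h1t)
      exact mul_le_mul_of_nonneg_left (mul_le_mul_of_nonneg_right hFq (hq0 i)) h7
    refine le_trans hstep1 ?_
    have h8 : (0:ℝ) ≤ (1/β) * q i := mul_nonneg (le_of_lt (div_pos one_pos hβpos)) (hq0 i)
    calc (1/(1-t)) * ((1/β) * q i) ≤ (1+ε) * ((1/β) * q i) :=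
          mul_le_mul_of_nonneg_right hinv h8
      _ = (1/β) * (1+ε) * q i := by ring
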